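/- Let 𝔖_m^r ⊆ Γ_{mr} denote the subgroup of permutations (with trivial root-of-unity components) preserving each of the r blocks {(t−1)m+1,…,tm}, t = 1,…,r, i.e. 𝔖_m^r = 𝔖_m × ⋯ × 𝔖_m. Then 𝔖_m^r is a normal subgroup of its normalizer N = N_{Γ_{mr}}(𝔖_m^r), and there is a group isomorphism N/𝔖_m^r ≅ Γ_r = 𝔖_r ⋉ μ_ℓ^r. -/

import Mathlib

noncomputable section

/-- The permutation automorphism of `Fin r → G` given by `σ`, i.e. `f ↦ f ∘ σ⁻¹`. -/
def permAut (G : Type*) [Group G] (r : ℕ) (σ : Equiv.Perm (Fin r)) : MulAut (Fin r → G) where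
  toFun f := f ∘ σ.symm
  invFun f := f ∘ σ
  left_inv f := by funext i; simp
  right_inv f := by funext i; simp
  map_mul' f g := rfl

/-- The action of `𝔖_r` on `G^r` by permutation of the coordinates. -/
def permHom (G : Type*) [Group G] (r : ℕ) : Equiv.Perm (Fin r) →* MulAut (Fin r → G) where
  toFun := permAut G r
  map_one' := MulEquiv.ext fun _ => rfl
  map_mul' _ _ := MulEquiv.ext fun _ => rfl

/-- The wreath product `Γ_k = 𝔖_k ⋉ μ_ℓ^k`, where `μ_ℓ ⊆ ℂˣ` is the group of `ℓ`-th
roots of unity. -/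
-- `mulAutArrow` acts by `f ↦ f ∘ σ⁻¹`, so `Wreath H (Fin k)` is definitionally `WreathGamma ℓ k`
-- for `H = rootsOfUnity ℓ ℂ`.
abbrev WreathGamma (ℓ k : ℕ) : Type :=
  (Fin k → rootsOfUnity ℓ ℂ) ⋊[permHom (rootsOfUnity ℓ ℂ) k] Equiv.Perm (Fin k)

/-!
Let `p : α → β` and let `𝔖_p ≤ 𝔖_α` be the Young subgroup of permutations preserving every fibre
of `p`. Conjugating a transposition inside a fibre shows that `(f, σ)` normalises `𝔖_p` only if
`σ` permutes the fibres and `f` is constant on them. Such an element induces a permutation of `β`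
and a function `β → H`, i.e. an element of `Γ_β`; this is a homomorphism whose kernel is `𝔖_p`,
which also shows that every such element normalises `𝔖_p`. It is onto as soon as every
permutation of `β` lifts to `α`, as happens for the block index `i ↦ i / m` on `Fin (m * r)`.
-/

open Function SemidirectProduct Subgroup

-- `mulAutArrow` acts by `f ↦ f ∘ σ⁻¹`, so `Wreath H (Fin k)` is definitionally `WreathGamma ℓ k`
-- for `H = rootsOfUnity ℓ ℂ`.
abbrev Wreath (H α : Type*) [Group H] : Type _ := (α → H) ⋊[mulAutArrow] Equiv.Perm α

lemma SemidirectProduct.mem_map_inr_iff {N G : Type*} [Group N] [Group G] {φ : G →* MulAut N}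
    {S : Subgroup G} {x : N ⋊[φ] G} : x ∈ S.map inr ↔ x.left = 1 ∧ x.right ∈ S := by
  constructor
  · rintro ⟨g, hg, rfl⟩
    exact ⟨rfl, hg⟩
  · rintro ⟨hl, hr⟩
    exact ⟨x.right, hr, SemidirectProduct.ext hl.symm rfl⟩

lemma Function.FactorsThrough.extend_eq_one_iff {α β γ : Type*} [One γ] {f : α → γ} {p : α → β}
    (hf : FactorsThrough f p) : extend p f 1 = 1 ↔ f = 1 := by
  refine ⟨fun h => funext fun i => ?_, fun h => h ▸ extend_one p⟩
  rw [← hf.extend_apply 1 i, h, Pi.one_apply, Pi.one_apply]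

namespace Equiv.Perm

variable {α β : Type*} (p : α → β)

def youngSubgroup : Subgroup (Perm α) where
  carrier := {σ | ∀ i, p (σ i) = p i}
  one_mem' _ := rfl
  mul_mem' hσ hτ i := (hσ _).trans (hτ i)
  inv_mem' {σ} hσ i := by simpa using (hσ (σ⁻¹ i)).symm

def fiberCompatible : Subgroup (Perm α) where
  carrier := {σ | ∀ i j, p (σ i) = p (σ j) ↔ p i = p j}
  one_mem' _ _ := Iff.rfl
  mul_mem' hσ hτ i j := (hσ _ _).trans (hτ i j)
  inv_mem' {σ} hσ i j := by simpa using (hσ (σ⁻¹ i) (σ⁻¹ j)).symm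

variable {p}

lemma youngSubgroup_le_fiberCompatible : youngSubgroup p ≤ fiberCompatible p :=
  fun σ hσ i j => by rw [hσ i, hσ j]

lemma swap_mem_youngSubgroup [DecidableEq α] {a b : α} (hab : p a = p b) :
    swap a b ∈ youngSubgroup p := by
  intro i
  rcases eq_or_ne i a with rfl | hia
  · rw [swap_apply_left, hab]
  rcases eq_or_ne i b with rfl | hib
  · rw [swap_apply_right, hab]
  · rw [swap_apply_of_ne_of_ne hia hib]

def inducedPerm (hp : Surjective p) (σ : fiberCompatible p) : Perm β :=
  (Setoid.quotientKerEquivOfSurjective p hp).permCongr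
    (Quotient.congr σ.1 fun i j => (σ.2 i j).symm)

lemma inducedPerm_apply (hp : Surjective p) (σ : fiberCompatible p) (i : α) :
    inducedPerm hp σ (p i) = p (σ.1 i) := by
  have : (Setoid.quotientKerEquivOfSurjective p hp).symm (p i) = ⟦i⟧ :=
    (Equiv.symm_apply_eq _).2 rfl
  rw [inducedPerm, permCongr_apply, this, Quotient.congr_mk]
  rfl

lemma inducedPerm_inv_apply (hp : Surjective p) (σ : fiberCompatible p) (i : α) :
    (inducedPerm hp σ)⁻¹ (p i) = p (σ.1⁻¹ i) := by
  rw [inv_eq_iff_eq, inducedPerm_apply, coe_inv, apply_symm_apply]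

lemma inducedPerm_eq_one_iff (hp : Surjective p) (σ : fiberCompatible p) :
    inducedPerm hp σ = 1 ↔ σ.1 ∈ youngSubgroup p := by
  refine ⟨fun h i => by rw [← inducedPerm_apply hp σ i, h, one_apply], fun h => ?_⟩
  ext b
  obtain ⟨i, rfl⟩ := hp b
  rw [inducedPerm_apply, h, one_apply]

end Equiv.Perm

open Equiv Perm

namespace Wreath

variable {H α β : Type*} [Group H] {p : α → β}

@[simp]
lemma mul_left_apply (x y : Wreath H α) (i : α) :
    (x * y).left i = x.left i * y.left (x.right⁻¹ i) := rfl

@[simp]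
lemma inv_left_apply (x : Wreath H α) (i : α) : x⁻¹.left i = (x.left (x.right i))⁻¹ := rfl

variable (H p)

def young : Subgroup (Wreath H α) := (youngSubgroup p).map inr

def fiberwise : Subgroup (Wreath H α) where
  carrier := {x | x.right ∈ fiberCompatible p ∧ FactorsThrough x.left p}
  one_mem' := ⟨one_mem _, fun _ _ _ => rfl⟩
  mul_mem' {x y} hx hy := ⟨mul_mem hx.1 hy.1, fun i j hij => by
    rw [mul_left_apply, mul_left_apply, hx.2 hij, hy.2 (((inv_mem hx.1) i j).2 hij)]⟩
  inv_mem' {x} hx := ⟨inv_mem hx.1, fun i j hij => by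
    rw [inv_left_apply, inv_left_apply, hx.2 ((hx.1 i j).2 hij)]⟩

variable {H p}

lemma right_mem_fiberCompatible {x : Wreath H α} (hx : x ∈ fiberwise H p) :
    x.right ∈ fiberCompatible p :=
  hx.1

lemma left_factorsThrough {x : Wreath H α} (hx : x ∈ fiberwise H p) : FactorsThrough x.left p :=
  hx.2

lemma young_le_fiberwise : young H p ≤ fiberwise H p := by
  rintro _ ⟨σ, hσ, rfl⟩
  exact ⟨youngSubgroup_le_fiberCompatible hσ, fun _ _ _ => rfl⟩

def toWreath (hp : Surjective p) {N : Subgroup (Wreath H α)} (hN : N ≤ fiberwise H p) :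
    N →* Wreath H β :=
  MonoidHom.mk'
    (fun x => ⟨extend p x.1.left 1, inducedPerm hp ⟨x.1.right, right_mem_fiberCompatible (hN x.2)⟩⟩)
    fun x y => by
      ext b
      · obtain ⟨i, rfl⟩ := hp b
        rw [mul_left_apply]
        dsimp only
        rw [(left_factorsThrough (hN (x * y).2)).extend_apply,
          (left_factorsThrough (hN x.2)).extend_apply, inducedPerm_inv_apply,
          (left_factorsThrough (hN y.2)).extend_apply]
        rfl
      · obtain ⟨i, rfl⟩ := hp b
        simp only [mul_right, Perm.coe_mul, comp_apply, inducedPerm_apply]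
        rfl

lemma ker_toWreath (hp : Surjective p) {N : Subgroup (Wreath H α)} (hN : N ≤ fiberwise H p) :
    (toWreath hp hN).ker = (young H p).subgroupOf N := by
  ext x
  rw [MonoidHom.mem_ker, mem_subgroupOf, young, mem_map_inr_iff, SemidirectProduct.ext_iff]
  exact and_congr (left_factorsThrough (hN x.2)).extend_eq_one_iff (inducedPerm_eq_one_iff hp _)

lemma toWreath_surjective (hp : Surjective p)
    (hlift : ∀ τ : Perm β, ∃ σ : Perm α, ∀ i, p (σ i) = τ (p i))
    {N : Subgroup (Wreath H α)} (hN : N ≤ fiberwise H p) (hN' : fiberwise H p ≤ N) :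
    Surjective (toWreath hp hN) := by
  intro y
  obtain ⟨σ, hσ⟩ := hlift y.right
  have hx : (⟨y.left ∘ p, σ⟩ : Wreath H α) ∈ fiberwise H p :=
    ⟨fun i j => by rw [hσ, hσ, y.right.injective.eq_iff], fun i j hij => by simp [hij]⟩
  refine ⟨⟨_, hN' hx⟩, SemidirectProduct.ext (funext fun b => ?_) (Perm.ext fun b => ?_)⟩ <;>
    obtain ⟨i, rfl⟩ := hp b
  · exact (left_factorsThrough hx).extend_apply 1 i
  · exact (inducedPerm_apply hp _ i).trans (hσ i)

lemma fiberwise_le_normalizer (hp : Surjective p) :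
    fiberwise H p ≤ normalizer (young H p : Set (Wreath H α)) := by
  have : ((young H p).subgroupOf (fiberwise H p)).Normal := by
    rw [← ker_toWreath hp le_rfl]
    infer_instance
  exact le_normalizer_of_normal_subgroupOf young_le_fiberwise

lemma apply_eq_of_mem_normalizer {x : Wreath H α} (hx : x ∈ normalizer (young H p : Set _))
    {a b : α} (hab : p a = p b) :
    p (x.right a) = p (x.right b) ∧ x.left (x.right a) = x.left (x.right b) := by
  classical
  have hconj := (mem_normalizer_iff.1 hx (inr (swap a b))).1 ⟨_, swap_mem_youngSubgroup hab, rfl⟩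
  obtain ⟨hl, hr⟩ := mem_map_inr_iff.1 hconj
  have hl := congrFun hl (x.right a)
  have hr := hr (x.right a)
  simp only [mul_left_apply, inv_left_apply, mul_right, inv_right, left_inr, right_inr,
    Pi.one_apply, mul_one, mul_inv_rev, swap_inv, Perm.coe_mul, Perm.coe_inv, comp_apply,
    symm_apply_apply, swap_apply_left] at hl hr
  exact ⟨hr.symm, mul_inv_eq_one.1 hl⟩

lemma normalizer_le_fiberwise : normalizer (young H p : Set _) ≤ fiberwise H p := by
  intro x hx
  -- `x⁻¹` normalises as well, which yields the converse implications.
  have hx' := inv_mem hx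
  refine ⟨fun i j => ⟨fun h => ?_, fun h => (apply_eq_of_mem_normalizer hx h).1⟩, fun i j h => ?_⟩
  · simpa using (apply_eq_of_mem_normalizer hx' h).1
  · simpa using (apply_eq_of_mem_normalizer hx (apply_eq_of_mem_normalizer hx' h).1).2

def normalizerQuotientEquiv (hp : Surjective p)
    (hlift : ∀ τ : Perm β, ∃ σ : Perm α, ∀ i, p (σ i) = τ (p i)) :
    normalizer (young H p : Set _) ⧸ (young H p).subgroupOf (normalizer (young H p : Set _)) ≃*
      Wreath H β :=
  (QuotientGroup.quotientMulEquivOfEq (ker_toWreath hp normalizer_le_fiberwise).symm).trans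
    (QuotientGroup.quotientKerEquivOfSurjective _
      (toWreath_surjective hp hlift normalizer_le_fiberwise (fiberwise_le_normalizer hp)))

end Wreath

section Blocks

variable {m r : ℕ}

def blockOf (i : Fin (m * r)) : Fin r := ⟨i / m, Nat.div_lt_of_lt_mul i.2⟩

def blockEquiv : Fin r × Fin m ≃ Fin (m * r) := finProdFinEquiv.trans (finCongr (Nat.mul_comm r m))

lemma blockOf_blockEquiv (x : Fin r × Fin m) : blockOf (blockEquiv x) = x.1 := by
  ext
  simp [blockOf, blockEquiv, finProdFinEquiv, Nat.add_mul_div_left _ _ x.2.pos,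
    Nat.div_eq_of_lt x.2.2]

lemma blockOf_surjective (hm : 0 < m) : Surjective (blockOf : Fin (m * r) → Fin r) :=
  fun t => ⟨blockEquiv (t, ⟨0, hm⟩), blockOf_blockEquiv _⟩

lemma exists_perm_lift_blockOf (τ : Perm (Fin r)) :
    ∃ σ : Perm (Fin (m * r)), ∀ i, blockOf (σ i) = τ (blockOf i) := by
  refine ⟨blockEquiv.permCongr (τ.prodCongr (Equiv.refl _)), fun i => ?_⟩
  obtain ⟨x, rfl⟩ := blockEquiv.surjective i
  simp [permCongr_apply, blockOf_blockEquiv]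

end Blocks

theorem statement_6_general (ℓ m r : ℕ) (hm : 1 ≤ m)
    -- `K = 𝔖_m^r`, the subgroup of permutations (with trivial root-of-unity components)
    -- preserving each of the `r` blocks of size `m`
    (K : Subgroup (WreathGamma ℓ (m * r)))
    (hK : K = Subgroup.closure
      {x : WreathGamma ℓ (m * r) | ∃ w : Equiv.Perm (Fin (m * r)),
        (∀ i : Fin (m * r), ((w i : ℕ) / m) = ((i : ℕ) / m)) ∧
        x = SemidirectProduct.inr w}) :
    (K.subgroupOf (Subgroup.normalizer (K : Set (WreathGamma ℓ (m * r))))).Normal ∧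
    Nonempty ((↥(Subgroup.normalizer (K : Set (WreathGamma ℓ (m * r)))) ⧸ K.subgroupOf (Subgroup.normalizer (K : Set (WreathGamma ℓ (m * r))))) ≃* WreathGamma ℓ r) := by
  have hK_young : K = Wreath.young (rootsOfUnity ℓ ℂ) (blockOf (m := m) (r := r)) := by
    rw [hK, Wreath.young, ← (youngSubgroup _).closure_eq, MonoidHom.map_closure]
    congr 1
    ext x
    refine exists_congr fun w => and_congr (forall_congr' fun i => ?_) eq_comm
    exact (Fin.ext_iff (a := blockOf (w i)) (b := blockOf i)).symm
  subst hK_young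
  exact ⟨normal_in_normalizer,
    ⟨Wreath.normalizerQuotientEquiv (blockOf_surjective hm) exists_perm_lift_blockOf⟩⟩

theorem statement_6 (ℓ m r : ℕ) (hℓ : 1 ≤ ℓ) (hm : 1 ≤ m) (hr : 1 ≤ r)
    -- `K = 𝔖_m^r`, the subgroup of permutations (with trivial root-of-unity components)
    -- preserving each of the `r` blocks of size `m`
    (K : Subgroup (WreathGamma ℓ (m * r)))
    (hK : K = Subgroup.closure
      {x : WreathGamma ℓ (m * r) | ∃ w : Equiv.Perm (Fin (m * r)),
        (∀ i : Fin (m * r), ((w i : ℕ) / m) = ((i : ℕ) / m)) ∧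
        x = SemidirectProduct.inr w}) :
    (K.subgroupOf (Subgroup.normalizer (K : Set (WreathGamma ℓ (m * r))))).Normal ∧
    Nonempty ((↥(Subgroup.normalizer (K : Set (WreathGamma ℓ (m * r)))) ⧸ K.subgroupOf (Subgroup.normalizer (K : Set (WreathGamma ℓ (m * r))))) ≃* WreathGamma ℓ r) :=
  statement_6_general ℓ m r hm K hK
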